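/- arXiv:1106.3120 — 2 statements merged into one kernel-verified Lean document; each statement's English description precedes it below -/
import Mathlib

section
/- Let N ≥ 2 and let z_1,…,z_m be complex numbers such that e_r(z) = h_r(z) for every 1 ≤ r < N, where e_r and h_r are the elementary and complete homogeneous symmetric polynomials in m variables (e_r = 0 for r > m). For integers k ≥ 1 and j ≥ 0 define S(k,j) := Σ_{ℓ=0}^{j} (−1)^ℓ h_{k+ℓ}(z)·e_{j−ℓ}(z). Then for all integers r > s ≥ 1 with r + s < N: S(s+1, r−1) − S(s, r) = e_r(z)·e_s(z) + 2·Σ_{ℓ=1}^{s−1} (−1)^ℓ e_{r+ℓ}(z)·e_{s−ℓ}(z) + 2(−1)^s e_{r+s}(z). -/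
/-- The value of the `r`-th elementary symmetric polynomial at `z : Fin m → ℂ`
(zero for `r > m`). -/
noncomputable def eVal (m : ℕ) (z : Fin m → ℂ) (r : ℕ) : ℂ :=
  MvPolynomial.eval z (MvPolynomial.esymm (Fin m) ℂ r)

/-- The value of the `r`-th complete homogeneous symmetric polynomial at `z : Fin m → ℂ`. -/
noncomputable def hVal (m : ℕ) (z : Fin m → ℂ) (r : ℕ) : ℂ :=
  MvPolynomial.eval z (MvPolynomial.hsymm (Fin m) ℂ r)

lemma geomAux (a : ℂ) :
    (1 - PowerSeries.C a * PowerSeries.X) * PowerSeries.mk (fun k => a ^ k) = 1 := by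
  ext n
  rw [sub_mul, one_mul, map_sub, mul_assoc]
  cases n with
  | zero => simp
  | succ n =>
    simp [PowerSeries.coeff_succ_X_mul, pow_succ, mul_comm]

lemma eVal_eq (m : ℕ) (z : Fin m → ℂ) (k : ℕ) :
    eVal m z k = ∑ t ∈ Finset.powersetCard k Finset.univ, ∏ i ∈ t, z i := by
  rw [eVal, MvPolynomial.esymm, map_sum]
  exact Finset.sum_congr rfl fun t _ => by rw [MvPolynomial.eval_prod]; simp

lemma coeffE (m : ℕ) (z : Fin m → ℂ) (k : ℕ) :
    (∏ i : Fin m, (1 - Polynomial.C (z i) * Polynomial.X)).coeff k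
      = (-1 : ℂ) ^ k * eVal m z k := by
  have h1 : ∀ i : Fin m, (1 - Polynomial.C (z i) * Polynomial.X)
      = Polynomial.C (-z i) * Polynomial.X + 1 := by
    intro i; rw [map_neg]; ring
  simp_rw [h1]
  rw [Finset.prod_add]
  have h2 : ∀ t : Finset (Fin m),
      (∏ i ∈ t, Polynomial.C (-z i) * Polynomial.X) * ∏ i ∈ Finset.univ \ t, (1:Polynomial ℂ)
        = Polynomial.C (∏ i ∈ t, (-z i)) * Polynomial.X ^ t.card := by
    intro t
    rw [Finset.prod_const_one, mul_one, Finset.prod_mul_distrib, map_prod,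
      Finset.prod_const]
  simp_rw [h2]
  rw [Polynomial.finset_sum_coeff]
  simp_rw [Polynomial.coeff_C_mul, Polynomial.coeff_X_pow, mul_ite, mul_one, mul_zero]
  rw [← Finset.sum_filter, eVal_eq, Finset.powersetCard_eq_filter]
  have h3 : Finset.filter (fun x : Finset (Fin m) => k = x.card) Finset.univ.powerset
      = Finset.filter (fun x : Finset (Fin m) => x.card = k) Finset.univ.powerset := by
    apply Finset.filter_congr; intro x _; exact eq_comm
  rw [h3, Finset.mul_sum]
  apply Finset.sum_congr rfl
  intro t ht
  have hc : t.card = k := (Finset.mem_filter.mp ht).2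
  simp_rw [neg_eq_neg_one_mul (z _), Finset.prod_mul_distrib, Finset.prod_const, hc]

lemma hVal_eq (m : ℕ) (z : Fin m → ℂ) (n : ℕ) :
    hVal m z n = ∑ s : Sym (Fin m) n, (s.1.map z).prod := by
  rw [hVal, MvPolynomial.hsymm, map_sum]
  apply Finset.sum_congr rfl
  intro s _
  rw [← Multiset.prod_hom _ (MvPolynomial.eval z), Multiset.map_map]
  simp

lemma prod_count_eq (m : ℕ) (z : Fin m → ℂ) (M : Multiset (Fin m)) :
    (M.map z).prod = ∏ i : Fin m, z i ^ M.count i := by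
  rw [Finset.prod_multiset_map_count]
  apply Finset.prod_subset (Finset.subset_univ _)
  intro i _ hi
  rw [Multiset.mem_toFinset] at hi
  rw [Multiset.count_eq_zero_of_notMem hi, pow_zero]

lemma sum_univ_finsupp (m : ℕ) (l : Fin m →₀ ℕ) :
    Finset.univ.sum ⇑l = l.sum fun _ => id := by
  rw [Finsupp.sum_fintype]
  · rfl
  · intro i; rfl

lemma coeffH (m : ℕ) (z : Fin m → ℂ) (n : ℕ) :
    PowerSeries.coeff n (∏ i : Fin m, PowerSeries.mk fun k => z i ^ k) = hVal m z n := by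
  rw [PowerSeries.coeff_prod]
  simp_rw [PowerSeries.coeff_mk, hVal_eq]
  symm
  apply Finset.sum_nbij (i := fun s => Multiset.toFinsupp s.1)
  · intro s _
    rw [Finset.mem_finsuppAntidiag]
    constructor
    · have : Finsupp.toMultiset (Multiset.toFinsupp s.1) = s.1 := Multiset.toFinsupp_toMultiset _
      have h2 := Finsupp.card_toMultiset (Multiset.toFinsupp s.1)
      rw [this, s.2] at h2
      rw [sum_univ_finsupp, ← h2]
    · exact Finset.subset_univ _
  · intro a _ b _ hab
    have := congrArg Finsupp.toMultiset hab
    rw [Multiset.toFinsupp_toMultiset, Multiset.toFinsupp_toMultiset] at this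
    exact Sym.coe_injective this
  · intro l hl
    rw [Finset.coe_univ]
    have hmem := Finset.mem_finsuppAntidiag.mp hl
    have hcard : Multiset.card (Finsupp.toMultiset l) = n := by
      rw [Finsupp.card_toMultiset, ← sum_univ_finsupp]
      exact hmem.1
    refine ⟨⟨Finsupp.toMultiset l, hcard⟩, Set.mem_univ _, ?_⟩
    simp [Finsupp.toMultiset_toFinsupp]
  · intro s _
    rw [prod_count_eq]
    apply Finset.prod_congr rfl
    intro i _
    rw [Multiset.toFinsupp_apply]

lemma eVal_zero (m : ℕ) (z : Fin m → ℂ) : eVal m z 0 = 1 := by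
  simp [eVal, MvPolynomial.esymm_zero]

lemma hVal_zero (m : ℕ) (z : Fin m → ℂ) : hVal m z 0 = 1 := by
  simp [hVal]

lemma eh_sum (m : ℕ) (z : Fin m → ℂ) (n : ℕ) (hn : 1 ≤ n) :
    ∑ i ∈ Finset.range (n + 1), (-1 : ℂ) ^ i * eVal m z i * hVal m z (n - i) = 0 := by
  have key : ((∏ i : Fin m, (1 - Polynomial.C (z i) * Polynomial.X) : Polynomial ℂ) :
      PowerSeries ℂ) * (∏ i : Fin m, PowerSeries.mk fun k => z i ^ k) = 1 := by
    have : ((∏ i : Fin m, (1 - Polynomial.C (z i) * Polynomial.X) : Polynomial ℂ) :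
        PowerSeries ℂ) = ∏ i : Fin m, (1 - PowerSeries.C (z i) * PowerSeries.X) := by
      rw [← Polynomial.coeToPowerSeries.ringHom_apply, map_prod]
      apply Finset.prod_congr rfl
      intro i _
      simp [Polynomial.coeToPowerSeries.ringHom_apply]
    rw [this, ← Finset.prod_mul_distrib]
    simp_rw [geomAux]
    exact Finset.prod_const_one
  have h0 := congrArg (PowerSeries.coeff n) key
  rw [PowerSeries.coeff_mul, Finset.Nat.sum_antidiagonal_eq_sum_range_succ_mk] at h0
  simp_rw [Polynomial.coeff_coe, coeffE, coeffH] at h0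
  rw [h0]
  rw [PowerSeries.coeff_one, if_neg (by omega)]

lemma ee_sum (N m : ℕ) (z : Fin m → ℂ)
    (heh : ∀ r : ℕ, 1 ≤ r → r < N → eVal m z r = hVal m z r)
    (n : ℕ) (hn : 1 ≤ n) (hnN : n < N) :
    ∑ i ∈ Finset.range (n + 1), (-1 : ℂ) ^ i * eVal m z i * eVal m z (n - i) = 0 := by
  rw [← eh_sum m z n hn]
  apply Finset.sum_congr rfl
  intro i hi
  rw [Finset.mem_range] at hi
  rcases Nat.eq_or_lt_of_le (Nat.lt_succ_iff.mp hi) with h | h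
  · subst h; rw [Nat.sub_self, eVal_zero, hVal_zero]
  · rw [heh (n - i) (by omega) (by omega)]

/-- The value `S(k,j) = Σ_{ℓ=0}^{j} (-1)^ℓ h_{k+ℓ}(z) e_{j-ℓ}(z)` of the hook Schur
function `s_{(k,1^j)}` at `z`. -/
noncomputable def hookVal (m : ℕ) (z : Fin m → ℂ) (k j : ℕ) : ℂ :=
  ∑ ℓ ∈ Finset.range (j + 1), (-1 : ℂ) ^ ℓ * hVal m z (k + ℓ) * eVal m z (j - ℓ)

/-- if `e_r(z) = h_r(z)` for all `1 ≤ r < N`, then for `r > s ≥ 1` with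
`r + s < N`:
`S(s+1,r-1) - S(s,r) = e_r e_s + 2 Σ_{ℓ=1}^{s-1} (-1)^ℓ e_{r+ℓ} e_{s-ℓ} + 2(-1)^s e_{r+s}`,
i.e. the entries of the spinor-variety matrix `u(ζ)` are values of Schur
`P̃`-functions. -/
theorem statement9 (N m : ℕ) (hN : 2 ≤ N) (z : Fin m → ℂ)
    (heh : ∀ r : ℕ, 1 ≤ r → r < N → eVal m z r = hVal m z r) :
    ∀ r s : ℕ, 1 ≤ s → s < r → r + s < N →
      hookVal m z (s + 1) (r - 1) - hookVal m z s r =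
        eVal m z r * eVal m z s +
        2 * (∑ ℓ ∈ Finset.Icc 1 (s - 1), (-1 : ℂ) ^ ℓ * (eVal m z (r + ℓ) * eVal m z (s - ℓ))) +
        2 * (-1 : ℂ) ^ s * eVal m z (r + s) := by
  intro r s hs hsr hrsN
  have hsq : ∀ a : ℕ, (-1 : ℂ) ^ a * (-1 : ℂ) ^ a = 1 := by
    intro a; rw [← pow_add, Even.neg_one_pow ⟨a, by ring⟩]
  have h1 : hookVal m z (s + 1) (r - 1) = (-1 : ℂ) ^ (s + 1) *
      ∑ i ∈ Finset.Ico (s + 1) (r + s + 1),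
        (-1 : ℂ) ^ i * eVal m z i * eVal m z (r + s - i) := by
    rw [Finset.mul_sum, Finset.sum_Ico_eq_sum_range]
    have hcount : r + s + 1 - (s + 1) = r := by omega
    rw [hcount, hookVal]
    have hr1 : r - 1 + 1 = r := by omega
    rw [hr1]
    apply Finset.sum_congr rfl
    intro ℓ hℓ
    rw [Finset.mem_range] at hℓ
    rw [← heh (s + 1 + ℓ) (by omega) (by omega)]
    have h2 : r + s - (s + 1 + ℓ) = r - 1 - ℓ := by omega
    rw [h2, pow_add (-1:ℂ) (s+1) ℓ]
    rw [show ((-1:ℂ)^(s+1) * ((-1:ℂ)^(s+1) * (-1:ℂ)^ℓ * eVal m z (s+1+ℓ) * eVal m z (r-1-ℓ)))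
        = ((-1:ℂ)^(s+1) * (-1:ℂ)^(s+1)) * ((-1:ℂ)^ℓ * eVal m z (s+1+ℓ) * eVal m z (r-1-ℓ)) by
          ring, hsq, one_mul]
  have h2 : hookVal m z s r = (-1 : ℂ) ^ s *
      ∑ i ∈ Finset.Ico s (r + s + 1),
        (-1 : ℂ) ^ i * eVal m z i * eVal m z (r + s - i) := by
    rw [Finset.mul_sum, Finset.sum_Ico_eq_sum_range]
    have hcount : r + s + 1 - s = r + 1 := by omega
    rw [hcount, hookVal]
    apply Finset.sum_congr rfl
    intro ℓ hℓ
    rw [Finset.mem_range] at hℓ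
    have hh : eVal m z (s + ℓ) = hVal m z (s + ℓ) := heh (s + ℓ) (by omega) (by omega)
    rw [← hh]
    have h3 : r + s - (s + ℓ) = r - ℓ := by omega
    rw [h3, pow_add (-1:ℂ) s ℓ]
    rw [show ((-1:ℂ)^s * ((-1:ℂ)^s * (-1:ℂ)^ℓ * eVal m z (s+ℓ) * eVal m z (r-ℓ)))
        = ((-1:ℂ)^s * (-1:ℂ)^s) * ((-1:ℂ)^ℓ * eVal m z (s+ℓ) * eVal m z (r-ℓ)) by ring,
      hsq, one_mul]
  have hT : ∑ i ∈ Finset.range (r + s + 1),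
      (-1 : ℂ) ^ i * eVal m z i * eVal m z (r + s - i) = 0 :=
    ee_sum N m z heh (r + s) (by omega) hrsN
  have hsplit : (∑ i ∈ Finset.range (s + 1), (-1 : ℂ) ^ i * eVal m z i * eVal m z (r + s - i))
      + (∑ i ∈ Finset.Ico (s + 1) (r + s + 1), (-1 : ℂ) ^ i * eVal m z i * eVal m z (r + s - i))
      = ∑ i ∈ Finset.range (r + s + 1), (-1 : ℂ) ^ i * eVal m z i * eVal m z (r + s - i) :=
    Finset.sum_range_add_sum_Ico _ (by omega)
  have hB : (∑ i ∈ Finset.Ico s (r + s + 1), (-1 : ℂ) ^ i * eVal m z i * eVal m z (r + s - i))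
      = (-1 : ℂ) ^ s * eVal m z s * eVal m z (r + s - s)
        + ∑ i ∈ Finset.Ico (s + 1) (r + s + 1), (-1 : ℂ) ^ i * eVal m z i * eVal m z (r + s - i) :=
    Finset.sum_eq_sum_Ico_succ_bot (by omega) _
  have hG : (-1 : ℂ) ^ s * ∑ i ∈ Finset.range s,
        (-1 : ℂ) ^ i * eVal m z i * eVal m z (r + s - i)
      = ∑ ℓ ∈ Finset.Icc 1 s, (-1 : ℂ) ^ ℓ * (eVal m z (r + ℓ) * eVal m z (s - ℓ)) := by
    rw [Finset.mul_sum]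
    apply Finset.sum_nbij' (i := fun i => s - i) (j := fun ℓ => s - ℓ)
    · intro a ha; rw [Finset.mem_range] at ha; rw [Finset.mem_Icc]; omega
    · intro a ha; rw [Finset.mem_Icc] at ha; rw [Finset.mem_range]; omega
    · intro a ha; rw [Finset.mem_range] at ha; omega
    · intro a ha; rw [Finset.mem_Icc] at ha; omega
    · intro a ha
      rw [Finset.mem_range] at ha
      have h4 : r + s - a = r + (s - a) := by omega
      have h6 : s - (s - a) = a := by omega
      rw [h4, h6]
      have h5 : (-1 : ℂ) ^ s = (-1 : ℂ) ^ (s - a) * (-1 : ℂ) ^ a := by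
        rw [← pow_add]; congr 1; omega
      rw [h5]
      rw [show ((-1:ℂ)^(s-a) * (-1:ℂ)^a * ((-1:ℂ)^a * eVal m z a * eVal m z (r + (s-a))))
          = ((-1:ℂ)^a * (-1:ℂ)^a) * ((-1:ℂ)^(s-a) * (eVal m z (r + (s-a)) * eVal m z a)) by
            ring, hsq, one_mul]
  have hGs : ∑ ℓ ∈ Finset.Icc 1 s, (-1 : ℂ) ^ ℓ * (eVal m z (r + ℓ) * eVal m z (s - ℓ))
      = (∑ ℓ ∈ Finset.Icc 1 (s - 1), (-1 : ℂ) ^ ℓ * (eVal m z (r + ℓ) * eVal m z (s - ℓ)))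
        + (-1 : ℂ) ^ s * eVal m z (r + s) := by
    have hs1 : s = (s - 1) + 1 := by omega
    rw [hs1, Finset.sum_Icc_succ_top (by omega), ← hs1, Nat.sub_self, eVal_zero, mul_one]
  have hfs : (-1 : ℂ) ^ s * ((-1 : ℂ) ^ s * eVal m z s * eVal m z (r + s - s))
      = eVal m z r * eVal m z s := by
    have h7 : r + s - s = r := by omega
    rw [h7, show ((-1:ℂ)^s * ((-1:ℂ)^s * eVal m z s * eVal m z r))
      = ((-1:ℂ)^s * (-1:ℂ)^s) * (eVal m z s * eVal m z r) by ring, hsq, one_mul, mul_comm]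
  have hrange : (∑ i ∈ Finset.range (s + 1), (-1 : ℂ) ^ i * eVal m z i * eVal m z (r + s - i))
      = (∑ i ∈ Finset.range s, (-1 : ℂ) ^ i * eVal m z i * eVal m z (r + s - i))
        + (-1 : ℂ) ^ s * eVal m z s * eVal m z (r + s - s) :=
    Finset.sum_range_succ _ s
  rw [h1, h2, hB]
  linear_combination hfs + 2 * hG + 2 * hGs - 2 * (-1:ℂ)^s * hT
    - 2 * (-1:ℂ)^s * hsplit + 2 * (-1:ℂ)^s * hrange
end

section
/- Let b : ℕ → ℂ be the sequence with b_0 = 0, b_1 = 1, satisfying the Apery recurrence n³b_n − (34n³−51n²+27n−5)b_{n−1} + (n−1)³b_{n−2} = 0 for all n ≥ 2, and let B(t) := Σ_{n≥0} b_n t^n ∈ ℂ[[t]]. Then L(B) = t, and consequently (D−1)(L(B)) = 0, where L := D³ − T∘(2D+1)(17D²+17D+5) + T²∘(D+1)³ is the Apery operator on ℂ[[t]], D(f) = t·f′ is the Euler operator, and T is multiplication by t. -/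
/-- The Euler operator `D = t d/dt` on formal power series `ℂ[[t]]`. -/
noncomputable def Dps : Module.End ℂ (PowerSeries ℂ) :=
  (LinearMap.mulLeft ℂ (PowerSeries.X : PowerSeries ℂ)) ∘ₗ
    (PowerSeries.derivative ℂ).toLinearMap

/-- The operator of multiplication by `t` on `ℂ[[t]]`. -/
noncomputable def Tps : Module.End ℂ (PowerSeries ℂ) :=
  LinearMap.mulLeft ℂ (PowerSeries.X : PowerSeries ℂ)

/-- The Apery operator `L = D³ - T(2D+1)(17D²+17D+5) + T²(D+1)³` on `ℂ[[t]]`. -/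
noncomputable def AperyOp : Module.End ℂ (PowerSeries ℂ) :=
  Dps ^ 3 - Tps * ((2 * Dps + 1) * (17 * Dps ^ 2 + 17 * Dps + 5)) + Tps ^ 2 * (Dps + 1) ^ 3

open PowerSeries in
lemma coeff_Dps (f : PowerSeries ℂ) (n : ℕ) : coeff n (Dps f) = n * coeff n f := by
  cases n with
  | zero => simp [Dps]
  | succ m => simp [Dps, coeff_succ_X_mul, coeff_derivative, mul_comm]

open PowerSeries in
lemma coeff_D3 (f : PowerSeries ℂ) (n : ℕ) :
    coeff n ((Dps ^ 3) f) = (n : ℂ) ^ 3 * coeff n f := by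
  simp only [pow_succ, pow_zero, one_mul, Module.End.mul_apply, coeff_Dps]
  ring

open PowerSeries in
lemma coeff_Q (f : PowerSeries ℂ) (m : ℕ) :
    coeff m ((((2 * Dps + 1) * (17 * Dps ^ 2 + 17 * Dps + 5) : Module.End ℂ (PowerSeries ℂ))) f)
      = (2 * (m : ℂ) + 1) * (17 * (m : ℂ) ^ 2 + 17 * (m : ℂ) + 5) * coeff m f := by
  simp only [Module.End.mul_apply, LinearMap.add_apply, Module.End.one_apply, pow_succ, pow_zero,
    one_mul, Module.End.natCast_apply, Module.End.ofNat_apply, map_add, map_nsmul, coeff_Dps]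
  simp only [nsmul_eq_mul]
  push_cast
  ring

open PowerSeries in
lemma coeff_Cube (f : PowerSeries ℂ) (m : ℕ) :
    coeff m ((((Dps + 1) ^ 3 : Module.End ℂ (PowerSeries ℂ))) f) = ((m : ℂ) + 1) ^ 3 * coeff m f := by
  simp only [pow_succ, pow_zero, one_mul, Module.End.mul_apply, LinearMap.add_apply,
    Module.End.one_apply, map_add, coeff_Dps]
  ring

/-- if `b : ℕ → ℂ` satisfies `b₀ = 0`, `b₁ = 1` and the Apery recurrence
for `n ≥ 2`, then the Apery operator applied to `B(t) = Σ bₙ tⁿ` gives `t`, and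
consequently `(D-1)(L(B)) = 0`. -/
theorem statement14 (b : ℕ → ℂ) (h0 : b 0 = 0) (h1 : b 1 = 1)
    (hrec : ∀ n : ℕ, 2 ≤ n →
      (n : ℂ) ^ 3 * b n
        - (34 * (n : ℂ) ^ 3 - 51 * (n : ℂ) ^ 2 + 27 * (n : ℂ) - 5) * b (n - 1)
        + ((n : ℂ) - 1) ^ 3 * b (n - 2) = 0) :
    AperyOp (PowerSeries.mk b) = PowerSeries.X ∧
    (Dps - 1) (AperyOp (PowerSeries.mk b)) = 0 := by
  have main : AperyOp (PowerSeries.mk b) = PowerSeries.X := by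
    ext n
    have expand : AperyOp (PowerSeries.mk b)
        = (Dps ^ 3) (PowerSeries.mk b)
          - PowerSeries.X * ((((2 * Dps + 1) * (17 * Dps ^ 2 + 17 * Dps + 5) : Module.End ℂ (PowerSeries ℂ))) (PowerSeries.mk b))
          + PowerSeries.X * (PowerSeries.X * ((((Dps + 1) ^ 3 : Module.End ℂ (PowerSeries ℂ))) (PowerSeries.mk b))) := by
      simp [AperyOp, Tps, LinearMap.sub_apply, LinearMap.add_apply, Module.End.mul_apply,
        pow_succ, LinearMap.mulLeft_apply, mul_assoc]
    rw [expand]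
    match n with
    | 0 =>
      simp only [map_add, map_sub, coeff_D3, PowerSeries.coeff_zero_X_mul,
        PowerSeries.coeff_mk, PowerSeries.coeff_X]
      norm_num [h0]
    | 1 =>
      simp only [map_add, map_sub, coeff_D3, PowerSeries.coeff_succ_X_mul, coeff_Q,
        PowerSeries.coeff_zero_X_mul, PowerSeries.coeff_mk, PowerSeries.coeff_X]
      norm_num [h0, h1]
    | (m + 2) =>
      have h := hrec (m + 2) (by omega)
      simp only [show m + 2 - 1 = m + 1 from rfl, show m + 2 - 2 = m from rfl] at h
      simp only [map_add, map_sub, coeff_D3, PowerSeries.coeff_succ_X_mul, coeff_Q, coeff_Cube,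
        PowerSeries.coeff_mk, PowerSeries.coeff_X, show m + 2 ≠ 1 by omega, if_false]
      push_cast at h ⊢
      linear_combination h
  refine ⟨main, ?_⟩
  rw [main]
  simp [Dps, LinearMap.sub_apply]
end
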